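/- arXiv:0809.1027 — 8 statements merged into one kernel-verified Lean document; each statement's English description precedes it below -/
import Mathlib

section
/- Let g be a log-concave probability density on ℝ, symmetric about 0 and unimodal at 0, and let y : [0,∞) → [0,∞) be a nonnegative nondecreasing function. Then θ ↦ g(y(θ))/g(y(θ)+θ) is nondecreasing on [0,∞). -/
/-! Since `g` is nonincreasing on `[0, ∞)`, `g (y s) / g (y s + s) ≤ g (y s) / g (y s + u)` for
`s ≤ u`. Log-concavity says that `x ↦ g x / g (x + u)` is nondecreasing, and `y s ≤ y u` gives
`g (y s) / g (y s + u) ≤ g (y u) / g (y u + u)`. -/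

open Set

theorem ConcaveOn.add_le_add_of_shift {S : Set ℝ} {f : ℝ → ℝ} (hf : ConcaveOn ℝ S f)
    {a b t : ℝ} (hab : a ≤ b) (ht : 0 ≤ t) (ha : a ∈ S) (hbt : b + t ∈ S) :
    f a + f (b + t) ≤ f b + f (a + t) := by
  rcases (show a ≤ b + t by linarith).eq_or_lt with hd | hd
  · obtain rfl : a = b := by linarith
    obtain rfl : t = 0 := by linarith
    rfl
  -- `b` and `a + t` are the convex combinations of `a` and `b + t` with swapped weights.
  set d := b + t - a
  have hd0 : 0 < d := sub_pos.mpr hd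
  have hw : 0 ≤ t / d := div_nonneg ht hd0.le
  have hw' : 0 ≤ 1 - t / d := by rw [sub_nonneg, div_le_one hd0]; linarith
  have hb := hf.2 ha hbt hw hw' (by ring)
  have hat := hf.2 ha hbt hw' hw (by ring)
  have eb : t / d * a + (1 - t / d) * (b + t) = b := by field_simp; ring
  have eat : (1 - t / d) * a + t / d * (b + t) = a + t := by field_simp; ring
  simp only [smul_eq_mul, eb, eat] at hb hat
  linarith

theorem div_add_le_div_add_of_concaveOn_log {g : ℝ → ℝ}
    (hg : ConcaveOn ℝ {x | 0 < g x} (fun x => Real.log (g x)))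
    {a b t : ℝ} (hab : a ≤ b) (ht : 0 ≤ t) (ha : 0 < g a) (hbt : 0 < g (b + t)) :
    g a / g (a + t) ≤ g b / g (b + t) := by
  have hsub : Icc a (b + t) ⊆ {x | 0 < g x} := hg.1.ordConnected.out ha hbt
  have hb : 0 < g b := hsub ⟨hab, by linarith⟩
  have hat : 0 < g (a + t) := hsub ⟨by linarith, by linarith⟩
  have hlog := hg.add_le_add_of_shift hab ht ha hbt
  rw [div_le_div_iff₀ hat hbt, ← Real.log_le_log_iff (by positivity) (by positivity),
    Real.log_mul ha.ne' hbt.ne', Real.log_mul hb.ne' hat.ne']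
  exact hlog

theorem stmt_2_general (g : ℝ → ℝ) (y : ℝ → ℝ)
    (hunimodal : AntitoneOn g (Set.Ici 0))
    (hlogconc : ConcaveOn ℝ {x | 0 < g x} (fun x => Real.log (g x)))
    (hynonneg : ∀ θ, 0 ≤ θ → 0 ≤ y θ)
    (hymono : MonotoneOn y (Set.Ici 0))
    (hden : ∀ θ, 0 ≤ θ → 0 < g (y θ + θ)) :
    MonotoneOn (fun θ => g (y θ) / g (y θ + θ)) (Set.Ici 0) := by
  intro s (hs : 0 ≤ s) u (hu : 0 ≤ u) hsu
  have hys : 0 ≤ y s := hynonneg s hs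
  have hyle : y s ≤ y u := hymono hs hu hsu
  have hshift : g (y s + u) ≤ g (y s + s) :=
    hunimodal (mem_Ici.mpr (by linarith)) (mem_Ici.mpr (by linarith)) (by linarith)
  have hpos_u : 0 < g (y s + u) :=
    (hden u hu).trans_le
      (hunimodal (mem_Ici.mpr (by linarith)) (mem_Ici.mpr (by linarith)) (by linarith))
  have hpos_s : 0 < g (y s) :=
    (hden s hs).trans_le (hunimodal hys (mem_Ici.mpr (by linarith)) (by linarith))
  calc g (y s) / g (y s + s) ≤ g (y s) / g (y s + u) :=
        div_le_div_of_nonneg_left hpos_s.le hpos_u hshift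
    _ ≤ g (y u) / g (y u + u) :=
        div_add_le_div_add_of_concaveOn_log hlogconc hyle hu hpos_s (hden u hu)

theorem stmt_2 (g : ℝ → ℝ) (y : ℝ → ℝ)
    (hnonneg : ∀ x, 0 ≤ g x)
    (hint : ∫ x, g x = 1)
    (hsym : ∀ x, g (-x) = g x)
    (hunimodal : AntitoneOn g (Set.Ici 0))
    (hlogconc : ConcaveOn ℝ {x | 0 < g x} (fun x => Real.log (g x)))
    (hynonneg : ∀ θ, 0 ≤ θ → 0 ≤ y θ)
    (hymono : MonotoneOn y (Set.Ici 0))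
    (hden : ∀ θ, 0 ≤ θ → 0 < g (y θ + θ)) :
    MonotoneOn (fun θ => g (y θ) / g (y θ + θ)) (Set.Ici 0) :=
  stmt_2_general g y hunimodal hlogconc hynonneg hymono hden
end

section
/- If g is a log-concave probability density on ℝ, then its cumulative distribution function G(x) = ∫_{-∞}^x g and its survival function 1 − G are both log-concave functions. -/
/-!
For a log-concave density `g`, moving two points inward by the same distance does not decrease
the product: `g u * g v ≤ g (u + d) * g (v - d)` whenever `0 ≤ d` and `u + d ≤ v`. Integrating this
over `u < x` and `v ∈ [y, y + s]` with `d = y - x` gives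
`G x * (G (y + s) - G y) ≤ G y * (G (x + s) - G x)`, i.e. `G x * G (y + s) ≤ G y * G (x + s)`.
For `y` the midpoint of `x` and `y + s` this reads `G x * G (y + s) ≤ G y ^ 2`: `log G` is midpoint
concave, and concave because `G` is continuous. Finally `1 - G x` is the distribution function of
the reflected density `g (-·)`, evaluated at `-x`.
-/

open MeasureTheory Set

theorem Set.Icc_subset_of_isClosed_of_add_div_two_mem {A : Set ℝ} {a b : ℝ} (hA : IsClosed A)
    (ha : a ∈ A) (hb : b ∈ A) (hmid : ∀ x ∈ A, ∀ y ∈ A, (x + y) / 2 ∈ A) : Icc a b ⊆ A := by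
  intro t ht
  by_contra ht_notMem
  -- `sSup L` and `sInf R` are the ends of the gap of `A` around `t`; their midpoint lies in the gap
  set L := A ∩ Icc a t
  set R := A ∩ Icc t b
  have hL_bdd : BddAbove L := ⟨t, fun z hz => hz.2.2⟩
  have hR_bdd : BddBelow R := ⟨t, fun z hz => hz.2.1⟩
  have hα : sSup L ∈ L := (hA.inter isClosed_Icc).csSup_mem ⟨a, ha, le_rfl, ht.1⟩ hL_bdd
  have hβ : sInf R ∈ R := (hA.inter isClosed_Icc).csInf_mem ⟨b, hb, ht.2, le_rfl⟩ hR_bdd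
  have hαt : sSup L < t := hα.2.2.lt_of_ne fun h => ht_notMem (h ▸ hα.1)
  have htβ : t < sInf R := hβ.2.1.lt_of_ne' fun h => ht_notMem (h ▸ hβ.1)
  have hm := hmid _ hα.1 _ hβ.1
  rcases le_total ((sSup L + sInf R) / 2) t with h | h
  · linarith [le_csSup hL_bdd ⟨hm, by linarith [hα.2.1], h⟩]
  · linarith [csInf_le hR_bdd ⟨hm, h, by linarith [hβ.2.2]⟩]

theorem ContinuousOn.concaveOn_of_midpoint {E : Type*} [AddCommGroup E] [Module ℝ E]
    [TopologicalSpace E] [IsTopologicalAddGroup E] [ContinuousSMul ℝ E] {S : Set E} {f : E → ℝ}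
    (hS : Convex ℝ S) (hf : ContinuousOn f S)
    (hmid : ∀ x ∈ S, ∀ y ∈ S, (f x + f y) / 2 ≤ f (midpoint ℝ x y)) : ConcaveOn ℝ S f := by
  refine ⟨hS, fun x hx y hy a b ha hb hab => ?_⟩
  let p : ℝ → E := fun t => (1 - t) • x + t • y
  let φ : ℝ → ℝ := fun t => f (p t) - ((1 - t) * f x + t * f y)
  have hp : MapsTo p (Icc 0 1) S := fun t ht => hS hx hy (by linarith [ht.2]) ht.1 (by ring)
  have hφ : ContinuousOn φ (Icc 0 1) := (hf.comp (by fun_prop) hp).sub (by fun_prop)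
  have hφ_nonneg : Icc (0 : ℝ) 1 ⊆ Icc 0 1 ∩ φ ⁻¹' Ici 0 := by
    refine Icc_subset_of_isClosed_of_add_div_two_mem
      (hφ.preimage_isClosed_of_isClosed isClosed_Icc isClosed_Ici)
      ⟨left_mem_Icc.2 zero_le_one, by simp [φ, p]⟩ ⟨right_mem_Icc.2 zero_le_one, by simp [φ, p]⟩ ?_
    rintro s ⟨hs, hφs⟩ t ⟨ht, hφt⟩
    refine ⟨⟨by linarith [hs.1, ht.1], by linarith [hs.2, ht.2]⟩, ?_⟩
    have hpm : midpoint ℝ (p s) (p t) = p ((s + t) / 2) := by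
      simp only [midpoint_eq_smul_add, invOf_eq_inv, p]
      module
    have := hmid _ (hp hs) _ (hp ht)
    rw [hpm] at this
    simp only [φ, mem_preimage, mem_Ici] at hφs hφt ⊢
    linarith
  obtain rfl : a = 1 - b := by linarith
  simpa [φ, p] using (hφ_nonneg ⟨hb, by linarith⟩).2

theorem ConcaveOn.add_le_add_of_inward_shift {S : Set ℝ} {φ : ℝ → ℝ} (hφ : ConcaveOn ℝ S φ)
    {u v d : ℝ} (hu : u ∈ S) (hv : v ∈ S) (hd : 0 ≤ d) (huv : u + d ≤ v) :
    φ u + φ v ≤ φ (u + d) + φ (v - d) := by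
  rcases hd.eq_or_lt with rfl | hd
  · simp
  -- `u + d` and `v - d` are the convex combinations of `u, v` with weights `(1 - θ, θ)`, `(θ, 1 - θ)`
  have huv' : 0 < v - u := by linarith
  set θ := d / (v - u)
  have hθ : θ ≤ 1 := (div_le_one huv').2 (by linarith)
  have h₁ := hφ.2 hu hv (sub_nonneg.2 hθ) (div_pos hd huv').le (by ring)
  have h₂ := hφ.2 hu hv (div_pos hd huv').le (sub_nonneg.2 hθ) (by ring)
  have e₁ : (1 - θ) • u + θ • v = u + d := by simp only [θ, smul_eq_mul]; field_simp; ring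
  have e₂ : θ • u + (1 - θ) • v = v - d := by simp only [θ, smul_eq_mul]; field_simp; ring
  rw [e₁] at h₁
  rw [e₂] at h₂
  simp only [smul_eq_mul] at h₁ h₂
  linarith

theorem setIntegral_preimage_add_right (f : ℝ → ℝ) (A : Set ℝ) (d : ℝ) :
    ∫ u in (· + d) ⁻¹' A, f (u + d) = ∫ u in A, f u :=
  (measurePreserving_add_right volume d).setIntegral_preimage_emb
    (MeasurableEquiv.addRight d).measurableEmbedding f A

theorem integral_Iio_comp_neg (f : ℝ → ℝ) (c : ℝ) :
    ∫ t in Iio c, f (-t) = ∫ t in Ioi (-c), f t := by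
  rw [← integral_Iic_eq_integral_Iio, integral_comp_neg_Iic]

section LogConcave

variable {g : ℝ → ℝ}

theorem mul_le_mul_of_inward_shift_of_concaveOn_log (hg : ∀ x, 0 ≤ g x)
    (hlog : ConcaveOn ℝ {x | 0 < g x} fun x => Real.log (g x)) {u v d : ℝ} (hd : 0 ≤ d)
    (huv : u + d ≤ v) : g u * g v ≤ g (u + d) * g (v - d) := by
  rcases (hg u).eq_or_lt with hu | hu
  · rw [← hu, zero_mul]
    exact mul_nonneg (hg _) (hg _)
  rcases (hg v).eq_or_lt with hv | hv
  · rw [← hv, mul_zero]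
    exact mul_nonneg (hg _) (hg _)
  have hpos : ∀ w ∈ Icc u v, 0 < g w := (convex_iff_ordConnected.1 hlog.1).out hu hv
  have hud := hpos (u + d) ⟨by linarith, huv⟩
  have hvd := hpos (v - d) ⟨by linarith, by linarith⟩
  rw [← Real.log_le_log_iff (by positivity) (by positivity), Real.log_mul hu.ne' hv.ne',
    Real.log_mul hud.ne' hvd.ne']
  exact hlog.add_le_add_of_inward_shift hu hv hd huv

variable (hg : ∀ x, 0 ≤ g x) (hint : Integrable g)
  (hlog : ConcaveOn ℝ {x | 0 < g x} fun x => Real.log (g x))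
include hg hint hlog

theorem mul_intervalIntegral_le_of_concaveOn_log {u x y s : ℝ} (hu : u ≤ x) (hxy : x ≤ y)
    (hs : 0 ≤ s) :
    g u * ∫ v in y..y + s, g v ≤ g (u + (y - x)) * ∫ v in x..x + s, g v := by
  set d := y - x
  calc g u * ∫ v in y..y + s, g v = ∫ v in y..y + s, g u * g v :=
        (intervalIntegral.integral_const_mul _ _).symm
    _ ≤ ∫ v in y..y + s, g (u + d) * g (v - d) := by
        refine intervalIntegral.integral_mono_on (by linarith)
          (hint.intervalIntegrable.const_mul _)
          ((hint.comp_sub_right d).intervalIntegrable.const_mul _) fun v hv => ?_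
        exact mul_le_mul_of_inward_shift_of_concaveOn_log hg hlog (by linarith) (by linarith [hv.1])
    _ = g (u + d) * ∫ v in x..x + s, g v := by
        rw [intervalIntegral.integral_const_mul, intervalIntegral.integral_comp_sub_right]
        congr 2 <;> ring

theorem integral_Iio_mul_intervalIntegral_le {x y s : ℝ} (hxy : x ≤ y) (hs : 0 ≤ s) :
    (∫ t in Iio x, g t) * ∫ t in y..y + s, g t ≤ (∫ t in Iio y, g t) * ∫ t in x..x + s, g t := by
  set d := y - x
  calc (∫ t in Iio x, g t) * ∫ t in y..y + s, g t = ∫ u in Iio x, g u * ∫ t in y..y + s, g t :=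
        (integral_mul_const _ _).symm
    _ ≤ ∫ u in Iio x, g (u + d) * ∫ t in x..x + s, g t :=
        setIntegral_mono_on (hint.integrableOn.mul_const _)
          ((hint.comp_add_right d).integrableOn.mul_const _) measurableSet_Iio
          fun u hu => mul_intervalIntegral_le_of_concaveOn_log hg hint hlog hu.le hxy hs
    _ = (∫ t in Iio y, g t) * ∫ t in x..x + s, g t := by
        rw [integral_mul_const, ← setIntegral_preimage_add_right g (Iio y) d,
          preimage_add_const_Iio, sub_sub_cancel]

theorem integral_Iio_mul_integral_Iio_le {x y s : ℝ} (hxy : x ≤ y) (hs : 0 ≤ s) :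
    (∫ t in Iio x, g t) * ∫ t in Iio (y + s), g t ≤
      (∫ t in Iio y, g t) * ∫ t in Iio (x + s), g t := by
  have hsplit : ∀ a b, ∫ t in Iio b, g t = (∫ t in Iio a, g t) + ∫ t in a..b, g t := fun a b => by
    rw [← intervalIntegral.integral_Iio_sub_Iio' hint.integrableOn hint.integrableOn]
    ring
  rw [hsplit y (y + s), hsplit x (x + s)]
  linear_combination integral_Iio_mul_intervalIntegral_le hg hint hlog hxy hs

theorem concaveOn_log_integral_Iio :
    ConcaveOn ℝ {x | 0 < ∫ t in Iio x, g t} fun x => Real.log (∫ t in Iio x, g t) := by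
  set G : ℝ → ℝ := fun x => ∫ t in Iio x, g t
  have hG_mono : Monotone G := fun x y hxy =>
    setIntegral_mono_set hint.integrableOn (ae_of_all _ fun t => hg t)
      (Iio_subset_Iio hxy).eventuallyLE
  have hG_cont : Continuous G := continuous_iff_continuousAt.2 fun a =>
    (hint.integrableOn.continuousOn_Iic_primitive_Iio (a₀ := a + 1)).continuousAt
      (Iic_mem_nhds (by linarith))
  refine ContinuousOn.concaveOn_of_midpoint
    (convex_iff_ordConnected.2 ⟨fun p hp q _ z hz => hp.trans_le (hG_mono hz.1)⟩)
    (fun x hx => (hG_cont.continuousAt.log hx.ne').continuousWithinAt) fun p hp q hq => ?_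
  wlog hpq : p ≤ q generalizing p q
  · rw [add_comm, midpoint_comm]
    exact this q hq p hp (le_of_not_ge hpq)
  set m := midpoint ℝ p q
  have hm : m = (p + q) / 2 := by
    simp only [m, midpoint_eq_smul_add, invOf_eq_inv, smul_eq_mul]
    ring
  have hmpos : 0 < G m := hp.trans_le (hG_mono (by linarith))
  have key : G p * G q ≤ G m * G m := by
    have := integral_Iio_mul_integral_Iio_le hg hint hlog (x := p) (y := m) (s := (q - p) / 2)
      (by linarith) (by linarith)
    rwa [show m + (q - p) / 2 = q by linarith, show p + (q - p) / 2 = m by linarith] at this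
  rw [← Real.log_le_log_iff (mul_pos hp hq) (mul_pos hmpos hmpos), Real.log_mul hp.ne' hq.ne',
    Real.log_mul hmpos.ne' hmpos.ne'] at key
  linarith

theorem concaveOn_log_integral_Ioi :
    ConcaveOn ℝ {x | 0 < ∫ t in Ioi x, g t} fun x => Real.log (∫ t in Ioi x, g t) := by
  have hrefl := (concaveOn_log_integral_Iio (g := fun t => g (-t)) (fun t => hg (-t))
    hint.comp_neg (hlog.comp_linearMap (-LinearMap.id))).comp_linearMap (-LinearMap.id)
  simpa [Function.comp_def, integral_Iio_comp_neg] using hrefl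

end LogConcave

theorem stmt_3 (g G : ℝ → ℝ)
    (hnonneg : ∀ x, 0 ≤ g x)
    (hintble : Integrable g)
    (hint : ∫ x, g x = 1)
    (hlogconc : ConcaveOn ℝ {x | 0 < g x} (fun x => Real.log (g x)))
    (hG : ∀ x, G x = ∫ t in Set.Iio x, g t) :
    ConcaveOn ℝ {x | 0 < G x} (fun x => Real.log (G x)) ∧
      ConcaveOn ℝ {x | G x < 1} (fun x => Real.log (1 - G x)) := by
  have hsurvival : ∀ x, 1 - G x = ∫ t in Ioi x, g t := fun x => by
    rw [← hint, hG, ← intervalIntegral.integral_Iio_add_Ici hintble.integrableOn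
      hintble.integrableOn, integral_Ici_eq_integral_Ioi, add_sub_cancel_left]
  constructor
  · simpa only [hG] using concaveOn_log_integral_Iio hnonneg hintble hlogconc
  · simpa only [← sub_pos (a := (1 : ℝ)), hsurvival] using
      concaveOn_log_integral_Ioi hnonneg hintble hlogconc
end

section
/- Let g be a probability density on ℝ that is symmetric about 0, unimodal at 0, and log-concave, with survival function Ḡ = 1 − G. Then for all z ≥ 0 (with g(2z) > 0), g(z)/g(2z) ≥ 1/(2Ḡ(z)) − 1. -/
/-!
Log-concavity gives `g (2z) g (s) ≤ g (z) g (z + s)` for `0 ≤ s ≤ z`, the four points having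
equal sums in pairs. Integrating over `s ∈ [0, z]` yields `g (2z) (G z - 1/2) ≤ g z · Ḡ z`, and
symmetry turns `G z - 1/2` into `1/2 - Ḡ z`, which rearranges to the claim.
-/

open MeasureTheory Set

theorem ConcaveOn.add_le_add_of_add_eq {s : Set ℝ} {f : ℝ → ℝ} (hf : ConcaveOn ℝ s f)
    {a b c d : ℝ} (ha : a ∈ s) (hd : d ∈ s) (hb : b ∈ Icc a d) (hc : c ∈ Icc a d)
    (hsum : a + d = b + c) : f a + f d ≤ f b + f c := by
  rcases (hb.1.trans hb.2).eq_or_lt with rfl | had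
  · obtain rfl : b = a := le_antisymm hb.2 hb.1
    obtain rfl : c = b := le_antisymm hc.2 hc.1
    rfl
  -- `b` and `c` are the two convex combinations of `a`, `d` with swapped weights `t`, `1 - t`.
  set t := (d - b) / (d - a)
  have ht : t * (d - a) = d - b := div_mul_cancel₀ _ (sub_pos.mpr had).ne'
  have ht0 : 0 ≤ t := div_nonneg (by linarith [hb.2]) (by linarith)
  have ht1 : t ≤ 1 := (div_le_one (by linarith)).mpr (by linarith [hb.1])
  have hfb := hf.2 ha hd ht0 (sub_nonneg.mpr ht1) (add_sub_cancel t 1)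
  have hfc := hf.2 ha hd (sub_nonneg.mpr ht1) ht0 (sub_add_cancel 1 t)
  rw [show t • a + (1 - t) • d = b by simp only [smul_eq_mul]; linarith] at hfb
  rw [show (1 - t) • a + t • d = c by simp only [smul_eq_mul]; linarith] at hfc
  simp only [smul_eq_mul] at hfb hfc
  linarith

theorem mul_le_mul_of_concaveOn_log {g : ℝ → ℝ}
    (hg : ConcaveOn ℝ {x | 0 < g x} (fun x => Real.log (g x)))
    {a b c d : ℝ} (ha : 0 < g a) (hd : 0 < g d) (hb : b ∈ Icc a d) (hc : c ∈ Icc a d)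
    (hsum : a + d = b + c) : g a * g d ≤ g b * g c := by
  have hgb : 0 < g b := hg.1.ordConnected.out ha hd hb
  have hgc : 0 < g c := hg.1.ordConnected.out ha hd hc
  have hlog := hg.add_le_add_of_add_eq ha hd hb hc hsum
  rw [← Real.log_mul ha.ne' hd.ne', ← Real.log_mul hgb.ne' hgc.ne'] at hlog
  exact (Real.log_le_log_iff (by positivity) (by positivity)).mp hlog

theorem mul_intervalIntegral_le_mul_integral_Ioi {g : ℝ → ℝ} (hnonneg : ∀ x, 0 ≤ g x)
    (hintble : Integrable g) (hg : ConcaveOn ℝ {x | 0 < g x} (fun x => Real.log (g x)))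
    {z : ℝ} (hz : 0 ≤ z) (h0 : 0 < g 0) (h2z : 0 < g (2 * z)) :
    g (2 * z) * ∫ s in 0..z, g s ≤ g z * ∫ x in Ioi z, g x := by
  have hpointwise : ∀ s ∈ Icc 0 z, g (2 * z) * g s ≤ g z * g (z + s) := fun s hs => by
    have hgs : 0 < g s := hg.1.ordConnected.out h0 h2z ⟨hs.1, by linarith [hs.2]⟩
    rw [mul_comm]
    exact mul_le_mul_of_concaveOn_log hg hgs h2z ⟨hs.2, by linarith [hs.2]⟩
      ⟨by linarith [hs.1], by linarith [hs.2]⟩ (by ring)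
  calc g (2 * z) * ∫ s in 0..z, g s
      = ∫ s in 0..z, g (2 * z) * g s := (intervalIntegral.integral_const_mul _ _).symm
    _ ≤ ∫ s in 0..z, g z * g (z + s) :=
        intervalIntegral.integral_mono_on hz (hintble.const_mul _).intervalIntegrable
          ((hintble.comp_add_left z).const_mul _).intervalIntegrable hpointwise
    _ = g z * ∫ s in z..z + z, g s := by
        rw [intervalIntegral.integral_const_mul, intervalIntegral.integral_comp_add_left g z,
          add_zero]
    _ ≤ g z * ∫ x in Ioi z, g x := by
        refine mul_le_mul_of_nonneg_left ?_ (hnonneg z)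
        rw [← intervalIntegral.integral_interval_add_Ioi hintble.integrableOn
          hintble.integrableOn]
        exact le_add_of_nonneg_right (setIntegral_nonneg measurableSet_Ioi fun x _ => hnonneg x)

theorem integral_Ioi_zero_of_even {g : ℝ → ℝ} (hsym : ∀ x, g (-x) = g x)
    (hintble : Integrable g) : ∫ x in Ioi 0, g x = (∫ x, g x) / 2 := by
  have hreflect := integral_comp_neg_Ioi 0 g
  simp only [hsym, neg_zero] at hreflect
  have hsplit := intervalIntegral.integral_Iic_add_Ioi (b := 0) hintble.integrableOn
    hintble.integrableOn
  linarith

theorem stmt_5_general (g G : ℝ → ℝ)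
    (hnonneg : ∀ x, 0 ≤ g x)
    (hintble : Integrable g)
    (hint : ∫ x, g x = 1)
    (hsym : ∀ x, g (-x) = g x)
    (hlogconc : ConcaveOn ℝ {x | 0 < g x} (fun x => Real.log (g x)))
    (hG : ∀ x, G x = ∫ t in Set.Iio x, g t)
    (z : ℝ) (hz : 0 ≤ z) (hgz : 0 < g (2 * z)) (hGz : 0 < 1 - G z) :
    g z / g (2 * z) ≥ 1 / (2 * (1 - G z)) - 1 := by
  have h0 : 0 < g 0 := hlogconc.1.ordConnected.out (x := -(2 * z))
    (by rwa [mem_ofPred_eq, hsym]) hgz ⟨by linarith, by linarith⟩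
  have htail : 1 - G z = ∫ x in Ioi z, g x := by
    rw [hG, ← hint, ← intervalIntegral.integral_Iio_add_Ici hintble.integrableOn
      hintble.integrableOn, integral_Ici_eq_integral_Ioi]
    ring
  have hmid : ∫ s in 0..z, g s = 1 / 2 - (1 - G z) := by
    rw [htail, ← intervalIntegral.integral_Ioi_sub_Ioi hintble.integrableOn hz,
      integral_Ioi_zero_of_even hsym hintble, hint]
  have hkey := mul_intervalIntegral_le_mul_integral_Ioi hnonneg hintble hlogconc hz h0 hgz
  rw [hmid, ← htail] at hkey
  rw [ge_iff_le, show 1 / (2 * (1 - G z)) - 1 = (1 / 2 - (1 - G z)) / (1 - G z) by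
    field_simp, div_le_div_iff₀ hGz hgz]
  linarith

theorem stmt_5 (g G : ℝ → ℝ)
    (hnonneg : ∀ x, 0 ≤ g x)
    (hintble : Integrable g)
    (hint : ∫ x, g x = 1)
    (hsym : ∀ x, g (-x) = g x)
    (hunimodal : AntitoneOn g (Set.Ici 0))
    (hlogconc : ConcaveOn ℝ {x | 0 < g x} (fun x => Real.log (g x)))
    (hG : ∀ x, G x = ∫ t in Set.Iio x, g t)
    (z : ℝ) (hz : 0 ≤ z) (hgz : 0 < g (2 * z)) (hGz : 0 < 1 - G z) :
    g z / g (2 * z) ≥ 1 / (2 * (1 - G z)) - 1 :=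
  stmt_5_general g G hnonneg hintble hint hsym hlogconc hG z hz hgz hGz
end

section
/- Let g be a probability density on ℝ that is symmetric about 0, unimodal at 0, and log-concave, with survival function Ḡ = 1 − G. Then for all z ≥ 0 with Ḡ(2z) > 0, Ḡ(z)/Ḡ(2z) ≥ 1/(2Ḡ(z)) − 1. -/
/-! The tail `Ḡ` of a log-concave density is itself log-concave at midpoints:
`Ḡ x * Ḡ (x + 2h) ≤ Ḡ (x + h) ^ 2`. Writing `Ḡ x = ∫_x^{x+h} g + Ḡ (x + h)`, this reduces to
`∫_x^{x+h} g * Ḡ (x + 2h) ≤ ∫_{x+h}^{x+2h} g * Ḡ (x + h)`, which holds under the double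
integral sign because `g (x + s) g (x + 2h + t) ≤ g (x + h + s) g (x + h + t)`, the outer pair
of points having the same sum as the inner pair. Symmetry gives `Ḡ 0 = 1/2`, so `x = 0`, `h = z`
yields `Ḡ (2z) ≤ 2 Ḡ(z)²`, i.e. `Ḡ z / Ḡ (2z) ≥ 1 / (2 Ḡ z)`. -/

open MeasureTheory Set

theorem ConcaveOn.add_le_add_of_add_eq_s6 {s : Set ℝ} {φ : ℝ → ℝ} (hφ : ConcaveOn ℝ s φ)
    {p q x y : ℝ} (hp : p ∈ s) (hq : q ∈ s) (hpx : p ≤ x) (hxq : x ≤ q) (hxy : x + y = p + q) :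
    φ p + φ q ≤ φ x + φ y := by
  obtain rfl | hpq := (hpx.trans hxq).eq_or_lt
  · obtain rfl : x = p := le_antisymm hxq hpx
    obtain rfl : y = x := by linarith
    rfl
  set w := (x - p) / (q - p)
  have hw0 : 0 ≤ w := div_nonneg (by linarith) (by linarith)
  have hw1 : w ≤ 1 := (div_le_one (by linarith)).2 (by linarith)
  have hx : (1 - w) • p + w • q = x := by
    simp only [w, smul_eq_mul]; field_simp; ring
  have hy : w • p + (1 - w) • q = y := by
    simp only [w, smul_eq_mul]; field_simp; linear_combination -(q - p) * hxy
  have h₁ := hφ.2 hp hq (sub_nonneg.2 hw1) hw0 (by ring)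
  have h₂ := hφ.2 hp hq hw0 (sub_nonneg.2 hw1) (by ring)
  rw [hx] at h₁
  rw [hy] at h₂
  simp only [smul_eq_mul] at h₁ h₂
  linarith

open Real in
theorem mul_le_mul_of_concaveOn_log_s6 {f : ℝ → ℝ} (hf₀ : ∀ x, 0 ≤ f x)
    (hf : ConcaveOn ℝ {x | 0 < f x} (fun x => log (f x)))
    {p q x y : ℝ} (hpx : p ≤ x) (hxq : x ≤ q) (hxy : x + y = p + q) :
    f p * f q ≤ f x * f y := by
  rcases (hf₀ p).eq_or_lt with hp | hp
  · rw [← hp, zero_mul]; exact mul_nonneg (hf₀ x) (hf₀ y)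
  rcases (hf₀ q).eq_or_lt with hq | hq
  · rw [← hq, mul_zero]; exact mul_nonneg (hf₀ x) (hf₀ y)
  have hsub : Icc p q ⊆ {x | 0 < f x} := hf.1.ordConnected.out hp hq
  have hx : 0 < f x := hsub ⟨hpx, hxq⟩
  have hy : 0 < f y := hsub ⟨by linarith, by linarith⟩
  calc f p * f q = exp (log (f p) + log (f q)) := by rw [exp_add, exp_log hp, exp_log hq]
    _ ≤ exp (log (f x) + log (f y)) := exp_le_exp.2 (hf.add_le_add_of_add_eq_s6 hp hq hpx hxq hxy)
    _ = f x * f y := by rw [exp_add, exp_log hx, exp_log hy]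

theorem setIntegral_mul_setIntegral_le {α β : Type*} [MeasurableSpace α] [MeasurableSpace β]
    {μ : Measure α} {ν : Measure β} [SFinite μ] [SFinite ν] {s : Set α} {t : Set β}
    (hs : MeasurableSet s) (ht : MeasurableSet t) {u u' : α → ℝ} {v v' : β → ℝ}
    (hu : IntegrableOn u s μ) (hv : IntegrableOn v t ν)
    (hu' : IntegrableOn u' s μ) (hv' : IntegrableOn v' t ν)
    (h : ∀ a ∈ s, ∀ b ∈ t, u a * v b ≤ u' a * v' b) :
    (∫ a in s, u a ∂μ) * (∫ b in t, v b ∂ν) ≤ (∫ a in s, u' a ∂μ) * ∫ b in t, v' b ∂ν := by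
  rw [← setIntegral_prod_mul, ← setIntegral_prod_mul]
  refine setIntegral_mono_on ?_ ?_ (hs.prod ht) fun p hp => h _ hp.1 _ hp.2
  · rw [IntegrableOn, ← Measure.prod_restrict]; exact hu.mul_prod hv
  · rw [IntegrableOn, ← Measure.prod_restrict]; exact hu'.mul_prod hv'

theorem setIntegral_comp_const_add {E : Type*} [NormedAddCommGroup E] [NormedSpace ℝ E]
    (f : ℝ → E) (c : ℝ) (s : Set ℝ) :
    ∫ x in s, f (c + x) = ∫ x in (c + ·) '' s, f x :=
  ((measurePreserving_add_left volume c).setIntegral_image_emb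
    (measurableEmbedding_addLeft c) f s).symm

theorem integral_Ici_mul_integral_Ici_le_sq {f : ℝ → ℝ} (hf₀ : ∀ x, 0 ≤ f x)
    (hfi : Integrable f) (hf : ConcaveOn ℝ {x | 0 < f x} (fun x => Real.log (f x)))
    (x : ℝ) {h : ℝ} (hh : 0 ≤ h) :
    (∫ t in Ici x, f t) * ∫ t in Ici (x + 2 * h), f t ≤ (∫ t in Ici (x + h), f t) ^ 2 := by
  have hshift_Ici (c : ℝ) : ∫ t in Ici 0, f (c + t) = ∫ t in Ici c, f t := by
    rw [setIntegral_comp_const_add, image_const_add_Ici, add_zero]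
  have hshift_Ico (c : ℝ) : ∫ t in Ico 0 h, f (c + t) = ∫ t in Ico c (c + h), f t := by
    rw [setIntegral_comp_const_add, image_const_add_Ico, add_zero]
  have hsplit (a b : ℝ) (hab : a ≤ b) :
      ∫ t in Ici a, f t = (∫ t in Ico a b, f t) + ∫ t in Ici b, f t := by
    rw [← intervalIntegral.integral_Ici_sub_Ici hfi.integrableOn hab]; ring
  have key : (∫ t in Ico x (x + h), f t) * (∫ t in Ici (x + 2 * h), f t) ≤
      (∫ t in Ico (x + h) (x + 2 * h), f t) * ∫ t in Ici (x + h), f t := by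
    have := setIntegral_mul_setIntegral_le (μ := volume) (ν := volume) (s := Ico 0 h)
      (t := Ici 0) measurableSet_Ico measurableSet_Ici
      (hfi.comp_add_left x).integrableOn (hfi.comp_add_left (x + 2 * h)).integrableOn
      (hfi.comp_add_left (x + h)).integrableOn (hfi.comp_add_left (x + h)).integrableOn
      fun s hs t ht => mul_le_mul_of_concaveOn_log_s6 hf₀ hf (by linarith [hs.1])
        (by linarith [hs.2, ht.out]) (by ring)
    rwa [hshift_Ico, hshift_Ico, hshift_Ici, hshift_Ici, add_assoc, ← two_mul] at this
  linear_combination key + (∫ t in Ici (x + 2 * h), f t) * hsplit x (x + h) (by linarith) -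
    (∫ t in Ici (x + h), f t) * hsplit (x + h) (x + 2 * h) (by linarith)

theorem integral_Ici_zero_of_even {f : ℝ → ℝ} (hfi : Integrable f) (hf : ∀ x, f (-x) = f x) :
    ∫ t in Ici 0, f t = (∫ t, f t) / 2 := by
  have hrefl : ∫ t in Iic 0, f t = ∫ t in Ioi 0, f t := by
    simpa [hf] using (integral_comp_neg_Ioi 0 f).symm
  rw [← intervalIntegral.integral_Iic_add_Ioi hfi.integrableOn hfi.integrableOn, hrefl,
    integral_Ici_eq_integral_Ioi]
  ring

theorem stmt_6_general (g G : ℝ → ℝ)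
    (hnonneg : ∀ x, 0 ≤ g x)
    (hintble : Integrable g)
    (hint : ∫ x, g x = 1)
    (hsym : ∀ x, g (-x) = g x)
    (hlogconc : ConcaveOn ℝ {x | 0 < g x} (fun x => Real.log (g x)))
    (hG : ∀ x, G x = ∫ t in Set.Iio x, g t)
    (z : ℝ) (hz : 0 ≤ z) (hGz2 : 0 < 1 - G (2 * z)) (hGz : 0 < 1 - G z) :
    (1 - G z) / (1 - G (2 * z)) ≥ 1 / (2 * (1 - G z)) - 1 := by
  have htail (c : ℝ) : 1 - G c = ∫ t in Ici c, g t := by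
    rw [hG, ← hint, ← intervalIntegral.integral_Iio_add_Ici hintble.integrableOn
      hintble.integrableOn]
    ring
  have hhalf : 1 - G 0 = 1 / 2 := by
    rw [htail, integral_Ici_zero_of_even hintble hsym, hint]
  have hlc := integral_Ici_mul_integral_Ici_le_sq hnonneg hintble hlogconc 0 hz
  rw [← htail, ← htail, ← htail, hhalf, zero_add, zero_add] at hlc
  have hratio : 1 / (2 * (1 - G z)) ≤ (1 - G z) / (1 - G (2 * z)) := by
    rw [div_le_div_iff₀ (by positivity) hGz2]
    linarith
  linarith

theorem stmt_6 (g G : ℝ → ℝ)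
    (hnonneg : ∀ x, 0 ≤ g x)
    (hintble : Integrable g)
    (hint : ∫ x, g x = 1)
    (hsym : ∀ x, g (-x) = g x)
    (hunimodal : AntitoneOn g (Set.Ici 0))
    (hlogconc : ConcaveOn ℝ {x | 0 < g x} (fun x => Real.log (g x)))
    (hG : ∀ x, G x = ∫ t in Set.Iio x, g t)
    (z : ℝ) (hz : 0 ≤ z) (hGz2 : 0 < 1 - G (2 * z)) (hGz : 0 < 1 - G z) :
    (1 - G z) / (1 - G (2 * z)) ≥ 1 / (2 * (1 - G z)) - 1 :=
  stmt_6_general g G hnonneg hintble hint hsym hlogconc hG z hz hGz2 hGz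
end

section
/- Let g be a density symmetric about 0 and unimodal at 0, with continuous strictly increasing CDF G. For 0 < α < 1 define l(x) = x − G⁻¹(1/2 + ((1−α)/2)·G(x)) for x > d₀ and l(x) = 0 for x ≤ d₀, where d₀ = G⁻¹(1/(1+α)). Then l is nondecreasing on ℝ. -/
/-!
For `x > d₀` write `ψ x = G⁻¹(1/2 + (1-α)/2 · G x)`, so that `l x = x - ψ x`. Symmetry gives
`G 0 = 1/2`, hence `0 ≤ ψ x`, and the choice of `d₀` gives `ψ x < x`. For `d₀ < x ≤ y` the interval `[ψ x, ψ y]` carries the mass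
`(1-α)/2 · (G y - G x) ≤ G y - G x`, whereas, `g` being nonincreasing on `[0, ∞)` and
`0 ≤ ψ x ≤ x`, the window `[ψ x, ψ x + (y - x)]` carries at least the mass of `[x, y]`.
Hence `ψ y - ψ x ≤ y - x`, which is the monotonicity of `l`.
-/

open MeasureTheory Set

theorem setIntegral_Iio_zero_of_even {g : ℝ → ℝ} (hg : Integrable g) (heven : ∀ x, g (-x) = g x) :
    ∫ t in Iio 0, g t = (∫ t, g t) / 2 := by
  have hreflect : ∫ t in Iic (0 : ℝ), g t = ∫ t in Ioi (0 : ℝ), g t := by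
    simpa only [heven, neg_zero] using integral_comp_neg_Iic 0 g
  have hsplit : (∫ t in Iic (0 : ℝ), g t) + ∫ t in Ioi (0 : ℝ), g t = ∫ t, g t := by
    rw [← compl_Iic]
    exact integral_add_compl measurableSet_Iic hg
  rw [← integral_Iic_eq_integral_Iio]
  linarith

theorem intervalIntegral_add_le_of_antitoneOn {g : ℝ → ℝ} (hg : AntitoneOn g (Ici 0))
    {a x h : ℝ} (ha : 0 ≤ a) (hax : a ≤ x) (hh : 0 ≤ h) :
    ∫ t in x..x + h, g t ≤ ∫ t in a..a + h, g t := by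
  have hwindow : uIcc a (a + h) = Icc a (a + h) := uIcc_of_le (by linarith)
  have hshifted : AntitoneOn (fun t => g (t + (x - a))) (uIcc a (a + h)) := by
    rw [hwindow]
    exact fun s hs t ht hst => hg (show (0 : ℝ) ≤ s + (x - a) by linarith [hs.1])
      (show (0 : ℝ) ≤ t + (x - a) by linarith [ht.1]) (by linarith)
  have hg_window : AntitoneOn g (uIcc a (a + h)) :=
    hg.mono (hwindow ▸ fun t ht => ha.trans ht.1)
  calc ∫ t in x..x + h, g t = ∫ t in a..a + h, g (t + (x - a)) := by
        rw [intervalIntegral.integral_comp_add_right]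
        congr 1 <;> ring
    _ ≤ ∫ t in a..a + h, g t :=
        intervalIntegral.integral_mono_on (by linarith) hshifted.intervalIntegrable
          hg_window.intervalIntegrable fun t ht =>
            hg (ha.trans ht.1) (show (0 : ℝ) ≤ t + (x - a) by linarith [ht.1]) (by linarith)

theorem sub_le_sub_of_antitone_increments {G : ℝ → ℝ} (hG : StrictMono G)
    (hinc : ∀ a x h, 0 ≤ a → a ≤ x → 0 ≤ h → G (x + h) - G x ≤ G (a + h) - G a)
    {a b x y : ℝ} (ha : 0 ≤ a) (hax : a ≤ x) (hxy : x ≤ y) (hle : G b - G a ≤ G y - G x) :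
    b - a ≤ y - x := by
  by_contra! hlt
  have hstep : G (a + (y - x)) < G b := hG (by linarith)
  have := hinc a x (y - x) ha hax (by linarith)
  rw [add_sub_cancel] at this
  linarith

theorem cdf_increment_le_of_antitoneOn {g G : ℝ → ℝ} (hg : Integrable g)
    (hunimodal : AntitoneOn g (Ici 0)) (hG : ∀ x, G x = ∫ t in Iio x, g t)
    {a x h : ℝ} (ha : 0 ≤ a) (hax : a ≤ x) (hh : 0 ≤ h) :
    G (x + h) - G x ≤ G (a + h) - G a := by
  simp only [hG, intervalIntegral.integral_Iio_sub_Iio' hg.integrableOn hg.integrableOn]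
  exact intervalIntegral_add_le_of_antitoneOn hunimodal ha hax hh

theorem monotone_sub_quantile {G Ginv : ℝ → ℝ} {α d₀ : ℝ} (hGmono : StrictMono G)
    (hinc : ∀ a x h, 0 ≤ a → a ≤ x → 0 ≤ h → G (x + h) - G x ≤ G (a + h) - G a)
    (hG_zero : G 0 = 1 / 2) (hG_nonneg : ∀ x, 0 ≤ G x) (hG_le_one : ∀ x, G x ≤ 1)
    (hGinvR : ∀ t ∈ Ioo (0 : ℝ) 1, G (Ginv t) = t) (hα : α ∈ Ioo (0 : ℝ) 1)
    (hd₀ : d₀ = Ginv (1 / (1 + α))) :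
    Monotone fun x => if x ≤ d₀ then 0 else x - Ginv (1 / 2 + (1 - α) / 2 * G x) := by
  obtain ⟨hα0, hα1⟩ := hα
  set ψ : ℝ → ℝ := fun x => Ginv (1 / 2 + (1 - α) / 2 * G x)
  have hGψ : ∀ x, G (ψ x) = 1 / 2 + (1 - α) / 2 * G x := fun x =>
    hGinvR _ ⟨by nlinarith [hG_nonneg x], by nlinarith [hG_le_one x]⟩
  have hψ_nonneg : ∀ x, 0 ≤ ψ x := fun x =>
    hGmono.le_iff_le.mp (by rw [hG_zero, hGψ]; nlinarith [hG_nonneg x])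
  have hψ_lt : ∀ x, d₀ < x → ψ x < x := fun x hx => by
    have hGd₀ : G d₀ = 1 / (1 + α) := hd₀ ▸ hGinvR _ ⟨by positivity, by
      rw [div_lt_one (by linarith)]; linarith⟩
    have : 1 < G x * (1 + α) := (div_lt_iff₀ (by linarith)).mp (hGd₀ ▸ hGmono hx)
    exact hGmono.lt_iff_lt.mp (by rw [hGψ]; nlinarith)
  have hψ_sub : ∀ x y, d₀ < x → x ≤ y → ψ y - ψ x ≤ y - x := fun x y hx hxy =>
    sub_le_sub_of_antitone_increments hGmono hinc (hψ_nonneg x) (hψ_lt x hx).le hxy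
      (by rw [hGψ, hGψ]; nlinarith [hGmono.monotone hxy])
  intro x y hxy
  dsimp only
  split_ifs with hx hy hy
  · rfl
  · linarith [hψ_lt y (not_le.mp hy)]
  · linarith
  · linarith [hψ_sub x y (not_le.mp hx) hxy]

theorem stmt_7_general (g G Ginv : ℝ → ℝ) (α d₀ : ℝ) (l : ℝ → ℝ)
    (hnonneg : ∀ x, 0 ≤ g x)
    (hint : ∫ x, g x = 1)
    (hsym : ∀ x, g (-x) = g x)
    (hunimodal : AntitoneOn g (Set.Ici 0))
    (hG : ∀ x, G x = ∫ t in Set.Iio x, g t)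
    (hGmono : StrictMono G)
    (hGinvR : ∀ t ∈ Set.Ioo (0:ℝ) 1, G (Ginv t) = t)
    (hα : α ∈ Set.Ioo (0:ℝ) 1)
    (hd₀ : d₀ = Ginv (1 / (1 + α)))
    (hl : ∀ x, l x = if x ≤ d₀ then 0 else x - Ginv (1 / 2 + (1 - α) / 2 * G x)) :
    Monotone l := by
  have hgint : Integrable g := .of_integral_ne_zero (by simp [hint])
  have hG_zero : G 0 = 1 / 2 := by rw [hG, setIntegral_Iio_zero_of_even hgint hsym, hint]
  have hG_nonneg : ∀ x, 0 ≤ G x := fun x => by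
    rw [hG]; exact setIntegral_nonneg measurableSet_Iio fun t _ => hnonneg t
  have hG_le_one : ∀ x, G x ≤ 1 := fun x => by
    rw [hG, ← hint]; exact setIntegral_le_integral hgint (.of_forall hnonneg)
  rw [show l = _ from funext hl]
  exact monotone_sub_quantile hGmono
    (fun _ _ _ => cdf_increment_le_of_antitoneOn hgint hunimodal hG)
    hG_zero hG_nonneg hG_le_one hGinvR hα hd₀

theorem stmt_7 (g G Ginv : ℝ → ℝ) (α d₀ : ℝ) (l : ℝ → ℝ)
    (hnonneg : ∀ x, 0 ≤ g x)
    (hint : ∫ x, g x = 1)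
    (hsym : ∀ x, g (-x) = g x)
    (hunimodal : AntitoneOn g (Set.Ici 0))
    (hG : ∀ x, G x = ∫ t in Set.Iio x, g t)
    (hGmono : StrictMono G)
    (hGcont : Continuous G)
    (hGinvL : ∀ x, Ginv (G x) = x)
    (hGinvR : ∀ t ∈ Set.Ioo (0:ℝ) 1, G (Ginv t) = t)
    (hα : α ∈ Set.Ioo (0:ℝ) 1)
    (hd₀ : d₀ = Ginv (1 / (1 + α)))
    (hl : ∀ x, l x = if x ≤ d₀ then 0 else x - Ginv (1 / 2 + (1 - α) / 2 * G x)) :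
    Monotone l :=
  stmt_7_general g G Ginv α d₀ l hnonneg hint hsym hunimodal hG hGmono hGinvR hα hd₀ hl
end

section
/- Let G be the CDF of a symmetric unimodal log-concave density g, α ∈ (0,1/3], d₀ = G⁻¹(1/(1+α)). Then G(2d₀) ≥ (1 − 3α²)/(1 − α²). -/
/-!
Write `T x = ∫_{x}^∞ g` for the tail of `g`. Log-concavity of `g` on `[0, ∞)` gives, for
`t ≥ 2z` and `0 ≤ b ≤ z`, the inequality `g b · g t ≤ g (z + b) · g (t - z)`, since `z + b`
and `t - z` lie between `b` and `t` and have the same sum. Integrating in `b ∈ [0, z]` and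
`t ≥ 2z` gives `(T 0 - T z) T (2z) ≤ (T z - T (2z)) T z`, that is `T 0 · T (2z) ≤ T z ^ 2`.
By symmetry `T 0 = 1/2`, and `T d₀ = α / (1 + α)` by the choice of `d₀`, so
`1 - G (2 d₀) = T (2 d₀) ≤ 2 α² / (1 + α)²`, which is stronger than the claim.
-/

open MeasureTheory Set

theorem ConcaveOn.add_le_add_of_mem_Icc {s : Set ℝ} {f : ℝ → ℝ} (hf : ConcaveOn ℝ s f)
    {u v p q : ℝ} (hu : u ∈ s) (hv : v ∈ s) (hp : p ∈ Icc u v) (hq : q ∈ Icc u v)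
    (hsum : p + q = u + v) : f u + f v ≤ f p + f q := by
  obtain huv | huv := (hp.1.trans hp.2).eq_or_lt
  · obtain rfl : p = u := le_antisymm (huv ▸ hp.2) hp.1
    obtain rfl : q = v := by linarith
    rfl
  have hvu : 0 < v - u := sub_pos.2 huv
  -- `p` and `q` are the mirror-image convex combinations `a u + b v` and `b u + a v`.
  set a := (v - p) / (v - u)
  set b := (p - u) / (v - u)
  have ha : 0 ≤ a := div_nonneg (by linarith [hp.2]) hvu.le
  have hb : 0 ≤ b := div_nonneg (by linarith [hp.1]) hvu.le
  have hab : a + b = 1 := by simp only [a, b]; field_simp; ring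
  have hp_eq : a • u + b • v = p := by simp only [smul_eq_mul, a, b]; field_simp; ring
  have hq_eq : b • u + a • v = q := by
    rw [show q = u + v - p by linarith]; simp only [smul_eq_mul, a, b]; field_simp; ring
  have hfp := hf.2 hu hv ha hb hab
  have hfq := hf.2 hu hv hb ha (by rwa [add_comm])
  rw [hp_eq] at hfp
  rw [hq_eq] at hfq
  simp only [smul_eq_mul] at hfp hfq
  linear_combination hfp + hfq - (f u + f v) * hab

theorem mul_le_mul_of_concaveOn_log_s12 {g : ℝ → ℝ} (hnonneg : ∀ x, 0 ≤ g x)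
    (hanti : AntitoneOn g (Ici 0))
    (hlogconc : ConcaveOn ℝ {x | 0 < g x} (fun x => Real.log (g x)))
    {u v p q : ℝ} (hu : 0 ≤ u) (hp : p ∈ Icc u v) (hq : q ∈ Icc u v) (hsum : p + q = u + v) :
    g u * g v ≤ g p * g q := by
  obtain hv | hv := (hnonneg v).eq_or_lt
  · rw [← hv, mul_zero]
    exact mul_nonneg (hnonneg p) (hnonneg q)
  have hpos : ∀ x ∈ Icc u v, 0 < g x := fun x hx =>
    hv.trans_le (hanti (hu.trans hx.1) (hu.trans (hx.1.trans hx.2)) hx.2)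
  have huv : u ≤ v := hp.1.trans hp.2
  have hgu := hpos u ⟨le_rfl, huv⟩
  have hgp := hpos p hp
  have hgq := hpos q hq
  have hlog := hlogconc.add_le_add_of_mem_Icc hgu hv hp hq hsum
  rw [← Real.log_mul hgu.ne' hv.ne', ← Real.log_mul hgp.ne' hgq.ne'] at hlog
  exact (Real.log_le_log_iff (mul_pos hgu hv) (mul_pos hgp hgq)).1 hlog

theorem setIntegral_Ici_comp_sub_right {E : Type*} [NormedAddCommGroup E] [NormedSpace ℝ E]
    (f : ℝ → E) (a c : ℝ) : ∫ t in Ici (a + c), f (t - c) = ∫ t in Ici a, f t := by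
  simpa [preimage_sub_const_Ici] using (measurePreserving_sub_right volume c)
    |>.setIntegral_preimage_emb (measurableEmbedding_subRight c) f (Ici a)

theorem integral_Ici_zero_mul_integral_Ici_two_mul_le_sq {g : ℝ → ℝ} (hg : Integrable g)
    (hnonneg : ∀ x, 0 ≤ g x) (hanti : AntitoneOn g (Ici 0))
    (hlogconc : ConcaveOn ℝ {x | 0 < g x} (fun x => Real.log (g x))) {z : ℝ} (hz : 0 ≤ z) :
    (∫ t in Ici 0, g t) * ∫ t in Ici (2 * z), g t ≤ (∫ t in Ici z, g t) ^ 2 := by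
  have hpoint : ∀ t ∈ Ici (2 * z), ∀ b ∈ Icc 0 z, g b * g t ≤ g (z + b) * g (t - z) :=
    fun t ht b hb => mul_le_mul_of_concaveOn_log_s12 hnonneg hanti hlogconc hb.1
      ⟨by linarith [hb.1], by linarith [hb.2, ht.out]⟩
      ⟨by linarith [hb.2, ht.out], by linarith⟩ (by ring)
  have hinner : ∀ t ∈ Ici (2 * z),
      (∫ b in 0..z, g b) * g t ≤ (∫ b in z..2 * z, g b) * g (t - z) := by
    intro t ht
    have hshift : ∫ b in 0..z, g (z + b) = ∫ b in z..2 * z, g b := by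
      rw [intervalIntegral.integral_comp_add_left, add_zero, two_mul]
    rw [← hshift, ← intervalIntegral.integral_mul_const, ← intervalIntegral.integral_mul_const]
    exact intervalIntegral.integral_mono_on hz (hg.intervalIntegrable.mul_const _)
      ((hg.comp_add_left z).intervalIntegrable.mul_const _) (hpoint t ht)
  have houter : (∫ b in 0..z, g b) * (∫ t in Ici (2 * z), g t)
      ≤ (∫ b in z..2 * z, g b) * ∫ t in Ici z, g t := by
    rw [← setIntegral_Ici_comp_sub_right g z z, ← two_mul, ← integral_const_mul,
      ← integral_const_mul]
    exact setIntegral_mono_on (hg.integrableOn.const_mul _)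
      ((hg.comp_sub_right z).integrableOn.const_mul _) measurableSet_Ici hinner
  rw [← intervalIntegral.integral_Ici_sub_Ici' hg.integrableOn hg.integrableOn,
    ← intervalIntegral.integral_Ici_sub_Ici' hg.integrableOn hg.integrableOn] at houter
  linear_combination houter

theorem integral_Ici_zero_eq_half_of_even {g : ℝ → ℝ} (hint : ∫ x, g x = 1)
    (hsym : ∀ x, g (-x) = g x) : ∫ t in Ici 0, g t = 1 / 2 := by
  have hg : Integrable g := Integrable.of_integral_ne_zero (by rw [hint]; exact one_ne_zero)
  have hrefl : ∫ t in Ioi 0, g t = ∫ t in Iic 0, g t := by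
    simpa only [hsym, neg_zero] using integral_comp_neg_Ioi 0 g
  have hsplit := intervalIntegral.integral_Iic_add_Ioi (b := 0) hg.integrableOn hg.integrableOn
  rw [integral_Ici_eq_integral_Ioi]
  linarith

theorem stmt_12_general (g G Ginv : ℝ → ℝ) (α d₀ : ℝ)
    (hnonneg : ∀ x, 0 ≤ g x)
    (hint : ∫ x, g x = 1)
    (hsym : ∀ x, g (-x) = g x)
    (hunimodal : AntitoneOn g (Set.Ici 0))
    (hlogconc : ConcaveOn ℝ {x | 0 < g x} (fun x => Real.log (g x)))
    (hG : ∀ x, G x = ∫ t in Set.Iio x, g t)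
    (hGmono : StrictMono G)
    (hGinvR : ∀ t ∈ Set.Ioo (0:ℝ) 1, G (Ginv t) = t)
    (hα : α ∈ Set.Ioc (0:ℝ) (1/3))
    (hd₀ : d₀ = Ginv (1 / (1 + α))) :
    G (2 * d₀) ≥ (1 - 3 * α ^ 2) / (1 - α ^ 2) := by
  obtain ⟨hα0, hα3⟩ := hα
  have hg : Integrable g := Integrable.of_integral_ne_zero (by rw [hint]; exact one_ne_zero)
  have hGtail : ∀ x, G x = 1 - ∫ t in Ici x, g t := fun x => by
    rw [hG, ← hint, ← intervalIntegral.integral_Iio_add_Ici hg.integrableOn hg.integrableOn]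
    ring
  have hhalf := integral_Ici_zero_eq_half_of_even hint hsym
  have hGd₀ : G d₀ = 1 / (1 + α) :=
    hd₀ ▸ hGinvR _ ⟨by positivity, by rw [div_lt_one (by linarith)]; linarith⟩
  have htail_d₀ : ∫ t in Ici d₀, g t = α / (1 + α) := by
    rw [hGtail] at hGd₀
    field_simp at hGd₀ ⊢
    linarith
  have hd₀ : 0 < d₀ := hGmono.lt_iff_lt.1 <| by
    rw [hGtail 0, hhalf, hGd₀, lt_div_iff₀ (by linarith)]
    linarith
  have key := integral_Ici_zero_mul_integral_Ici_two_mul_le_sq hg hnonneg hunimodal hlogconc hd₀.le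
  rw [hhalf, htail_d₀, div_pow, le_div_iff₀ (by positivity)] at key
  rw [hGtail, ge_iff_le, div_le_iff₀ (by nlinarith)]
  nlinarith

theorem stmt_12 (g G Ginv : ℝ → ℝ) (α d₀ : ℝ)
    (hnonneg : ∀ x, 0 ≤ g x)
    (hint : ∫ x, g x = 1)
    (hsym : ∀ x, g (-x) = g x)
    (hunimodal : AntitoneOn g (Set.Ici 0))
    (hlogconc : ConcaveOn ℝ {x | 0 < g x} (fun x => Real.log (g x)))
    (hG : ∀ x, G x = ∫ t in Set.Iio x, g t)
    (hGmono : StrictMono G)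
    (hGcont : Continuous G)
    (hGinvL : ∀ x, Ginv (G x) = x)
    (hGinvR : ∀ t ∈ Set.Ioo (0:ℝ) 1, G (Ginv t) = t)
    (hα : α ∈ Set.Ioc (0:ℝ) (1/3))
    (hd₀ : d₀ = Ginv (1 / (1 + α))) :
    G (2 * d₀) ≥ (1 - 3 * α ^ 2) / (1 - α ^ 2) :=
  stmt_12_general g G Ginv α d₀ hnonneg hint hsym hunimodal hlogconc hG hGmono hGinvR hα hd₀
end

section
/- Under the setup of Lemma 5, C(2d₀) = G(x₁(2d₀)) − G(x₂(2d₀)) with x₂(2d₀) = −d₀, and C(2d₀) ≥ 1 − 3α/2. -/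
/-!
By symmetry `G (-d₀) = 1 - G d₀ = α / (1 + α)`, so `-d₀` solves the equation defining `x₂`,
whose left side minus right side is strictly decreasing. The equation for `x₁` forces
`G x₁ ≥ 1 / (1 + α) = G d₀`, so `x₁ + 2 d₀ ≥ 3 d₀` and everything hinges on a lower bound for
`G (3 d₀)`. Log-concavity of `g` makes `t ↦ g (t + b) / g t` nonincreasing, and integrating this
shows that the tail `S x = ∫_{x}^{∞} g` satisfies `S (a + b) S c ≤ S a S (c + b)` for `c ≤ a`,
`0 ≤ b`. Since `S 0 = 1 / 2`, this gives `S (3 d₀) ≤ 4 S(d₀)³ = 4 (α / (1 + α))³`, and the claimed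
bound reduces to `1 + 3 α² ≥ 0`.
-/

open MeasureTheory Set

theorem ConcaveOn.add_le_add_of_shift_s13 {φ : ℝ → ℝ} {S : Set ℝ} (hφ : ConcaveOn ℝ S φ)
    {s t b : ℝ} (hs : s ∈ S) (htb : t + b ∈ S) (hst : s ≤ t) (hb : 0 ≤ b) :
    φ (t + b) + φ s ≤ φ t + φ (s + b) := by
  obtain rfl | hb := hb.eq_or_lt
  · simp [add_comm]
  have hden : 0 < t + b - s := by linarith
  set l := b / (t + b - s)
  have hl0 : 0 ≤ l := by positivity
  have hl1 : 0 ≤ 1 - l := by rw [sub_nonneg, div_le_one hden]; linarith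
  have hl : l * (t + b - s) = b := div_mul_cancel₀ _ hden.ne'
  have ht := hφ.2 htb hs hl1 hl0 (by ring)
  have hsb := hφ.2 htb hs hl0 hl1 (by ring)
  simp only [smul_eq_mul] at ht hsb
  rw [show (1 - l) * (t + b) + l * s = t by linear_combination -hl] at ht
  rw [show l * (t + b) + (1 - l) * s = s + b by linear_combination hl] at hsb
  linarith

section Tail

variable {g : ℝ → ℝ}

theorem mul_le_mul_shift_of_logConcave (hnonneg : ∀ x, 0 ≤ g x)
    (hlogconc : ConcaveOn ℝ {x | 0 < g x} (fun x => Real.log (g x)))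
    {s t b : ℝ} (hst : s ≤ t) (hb : 0 ≤ b) :
    g (t + b) * g s ≤ g t * g (s + b) := by
  rcases (hnonneg (t + b)).eq_or_lt with h | htb
  · rw [← h, zero_mul]; exact mul_nonneg (hnonneg _) (hnonneg _)
  rcases (hnonneg s).eq_or_lt with h | hs
  · rw [← h, mul_zero]; exact mul_nonneg (hnonneg _) (hnonneg _)
  have hIcc : Icc s (t + b) ⊆ {x | 0 < g x} :=
    hlogconc.1.ordConnected.out hs htb
  have ht : 0 < g t := hIcc ⟨hst, by linarith⟩
  have hsb : 0 < g (s + b) := hIcc ⟨by linarith, by linarith⟩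
  rw [← Real.log_le_log_iff (by positivity) (by positivity), Real.log_mul htb.ne' hs.ne',
    Real.log_mul ht.ne' hsb.ne']
  exact hlogconc.add_le_add_of_shift_s13 hs htb hst hb

noncomputable def tail (g : ℝ → ℝ) (x : ℝ) : ℝ := ∫ t in Ioi x, g t

theorem tail_nonneg (hnonneg : ∀ x, 0 ≤ g x) (x : ℝ) : 0 ≤ tail g x :=
  setIntegral_nonneg measurableSet_Ioi fun t _ => hnonneg t

theorem tail_add (b x : ℝ) : tail g (x + b) = ∫ t in Ioi x, g (t + b) := by
  have := (measurePreserving_add_right volume b).setIntegral_preimage_emb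
    (measurableEmbedding_addRight b) g (Ioi (x + b))
  rw [preimage_add_const_Ioi, add_sub_cancel_right] at this
  exact this.symm

theorem tail_add_mul_le_of_logConcave (hnonneg : ∀ x, 0 ≤ g x)
    (hlogconc : ConcaveOn ℝ {x | 0 < g x} (fun x => Real.log (g x))) (hg : Integrable g)
    {s a b : ℝ} (hsa : s ≤ a) (hb : 0 ≤ b) :
    tail g (a + b) * g s ≤ tail g a * g (s + b) := by
  rw [tail_add, tail, ← integral_mul_const, ← integral_mul_const]
  refine setIntegral_mono_on ((hg.comp_add_right b).integrableOn.mul_const _)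
    (hg.integrableOn.mul_const _) measurableSet_Ioi fun t ht => ?_
  exact mul_le_mul_shift_of_logConcave hnonneg hlogconc (hsa.trans ht.le) hb

theorem tail_sub_tail (hg : Integrable g) {a c : ℝ} (hca : c ≤ a) :
    tail g c - tail g a = ∫ x in c..a, g x :=
  intervalIntegral.integral_Ioi_sub_Ioi hg.integrableOn hca

theorem tail_add_mul_tail_le_of_logConcave (hnonneg : ∀ x, 0 ≤ g x)
    (hlogconc : ConcaveOn ℝ {x | 0 < g x} (fun x => Real.log (g x))) (hg : Integrable g)
    {a b c : ℝ} (hca : c ≤ a) (hb : 0 ≤ b) :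
    tail g (a + b) * tail g c ≤ tail g a * tail g (c + b) := by
  have hc := tail_sub_tail hg hca
  have hcb := tail_sub_tail hg (by linarith : c + b ≤ a + b)
  rw [← intervalIntegral.integral_comp_add_right] at hcb
  -- `hc` and `hcb` split the tails at `a` and `a + b`; the products `tail g a * tail g (a + b)` cancel
  have key : tail g (a + b) * ∫ x in c..a, g x ≤ tail g a * ∫ x in c..a, g (x + b) := by
    rw [← intervalIntegral.integral_const_mul, ← intervalIntegral.integral_const_mul]
    exact intervalIntegral.integral_mono_on hca (hg.intervalIntegrable.const_mul _)
      ((hg.comp_add_right b).intervalIntegrable.const_mul _)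
      fun x hx => tail_add_mul_le_of_logConcave hnonneg hlogconc hg hx.2 hb
  linear_combination key + tail g (a + b) * hc - tail g a * hcb

theorem tail_add_mul_mul_pow_le_of_logConcave (hnonneg : ∀ x, 0 ≤ g x)
    (hlogconc : ConcaveOn ℝ {x | 0 < g x} (fun x => Real.log (g x))) (hg : Integrable g)
    {c d : ℝ} (hd : 0 ≤ d) (n : ℕ) :
    tail g (c + (n + 1) * d) * tail g c ^ n ≤ tail g (c + d) ^ (n + 1) := by
  induction n with
  | zero => simp
  | succ n ih =>
    have step := tail_add_mul_tail_le_of_logConcave hnonneg hlogconc hg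
      (a := c + (n + 1) * d) (c := c) (le_add_of_nonneg_right (by positivity)) hd
    rw [show c + (n + 1) * d + d = c + ((n + 1 : ℕ) + 1) * d by push_cast; ring] at step
    calc tail g (c + ((n + 1 : ℕ) + 1) * d) * tail g c ^ (n + 1)
        = tail g (c + ((n + 1 : ℕ) + 1) * d) * tail g c * tail g c ^ n := by ring
      _ ≤ tail g (c + (n + 1) * d) * tail g (c + d) * tail g c ^ n :=
        mul_le_mul_of_nonneg_right step (pow_nonneg (tail_nonneg hnonneg c) n)
      _ ≤ tail g (c + d) ^ (n + 1) * tail g (c + d) := by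
        rw [mul_right_comm]
        exact mul_le_mul_of_nonneg_right ih (tail_nonneg hnonneg _)
      _ = tail g (c + d) ^ (n + 1 + 1) := by ring

theorem integral_Iio_add_tail (hg : Integrable g) (x : ℝ) :
    (∫ t in Iio x, g t) + tail g x = ∫ t, g t := by
  rw [tail, ← integral_Ici_eq_integral_Ioi,
    intervalIntegral.integral_Iio_add_Ici hg.integrableOn hg.integrableOn]

theorem tail_eq_integral_Iio_neg (hsym : ∀ x, g (-x) = g x) (x : ℝ) :
    tail g x = ∫ t in Iio (-x), g t := by
  simp only [tail, ← integral_Iic_eq_integral_Iio, ← integral_comp_neg_Ioi, hsym]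

end Tail

section SymmetricDensity

variable {g G : ℝ → ℝ}

theorem tail_eq_one_sub_cdf (hint : ∫ x, g x = 1) (hG : ∀ x, G x = ∫ t in Iio x, g t)
    (x : ℝ) : tail g x = 1 - G x := by
  linarith [integral_Iio_add_tail (integrable_of_integral_eq_one hint) x, hG x]

theorem cdf_neg (hint : ∫ x, g x = 1) (hsym : ∀ x, g (-x) = g x)
    (hG : ∀ x, G x = ∫ t in Iio x, g t) (x : ℝ) : G (-x) = 1 - G x := by
  rw [hG, ← tail_eq_integral_Iio_neg hsym, tail_eq_one_sub_cdf hint hG]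

theorem one_sub_four_mul_pow_le_cdf_three_mul (hnonneg : ∀ x, 0 ≤ g x)
    (hint : ∫ x, g x = 1) (hsym : ∀ x, g (-x) = g x)
    (hlogconc : ConcaveOn ℝ {x | 0 < g x} (fun x => Real.log (g x)))
    (hG : ∀ x, G x = ∫ t in Iio x, g t) {d : ℝ} (hd : 0 ≤ d) :
    1 - 4 * (1 - G d) ^ 3 ≤ G (3 * d) := by
  have htail := tail_eq_one_sub_cdf hint hG
  have h₀ : tail g 0 = 1 / 2 := by
    linarith [htail 0, cdf_neg hint hsym hG 0, show G (-0) = G 0 by rw [neg_zero]]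
  have := tail_add_mul_mul_pow_le_of_logConcave hnonneg hlogconc
    (integrable_of_integral_eq_one hint) (c := 0) hd 2
  norm_num [h₀, htail] at this
  linarith

end SymmetricDensity

theorem StrictMono.eq_of_one_sub_two_mul_eq {G : ℝ → ℝ} (hG : StrictMono G) {k θ y z : ℝ}
    (hk : 0 ≤ k) (hy : 1 - 2 * G y = k * G (y + θ)) (hz : 1 - 2 * G z = k * G (z + θ)) :
    y = z := by
  have hmono : StrictMono fun x => 2 * G x + k * G (x + θ) :=
    (hG.const_mul two_pos).add_monotone
      ((hG.monotone.comp (monotone_id.add_const θ)).const_mul hk)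
  exact hmono.injective (by linarith)

theorem one_sub_three_mul_div_two_le {α u t : ℝ} (hα : α ∈ Ioo (0 : ℝ) 1)
    (hu : 2 * u - 1 = (1 - α) * t) (ht : 1 - 4 * (α / (1 + α)) ^ 3 ≤ t) :
    1 - 3 * α / 2 ≤ u - α / (1 + α) := by
  obtain ⟨hα0, hα1⟩ := hα
  have h1α : 0 < 1 + α := by linarith
  have hu' : (1 - α) * (1 - 4 * (α / (1 + α)) ^ 3) ≤ 2 * u - 1 := by
    rw [hu]; exact mul_le_mul_of_nonneg_left ht (by linarith)
  rw [← sub_nonneg]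
  have key : u - α / (1 + α) - (1 - 3 * α / 2) =
      ((2 * u - 1) - (1 - α) * (1 - 4 * (α / (1 + α)) ^ 3)) / 2
        + α ^ 2 * (1 + 3 * α ^ 2) / (1 + α) ^ 3 := by
    field_simp; ring
  rw [key]
  have := sub_nonneg.2 hu'
  positivity

theorem one_sub_three_mul_div_two_le_cdf_sub {G : ℝ → ℝ} (hG : StrictMono G) {α d x : ℝ}
    (hα : α ∈ Ioo (0 : ℝ) 1) (hd : 0 ≤ d) (hGd : G d = 1 / (1 + α))
    (hx : 2 * G x - 1 = (1 - α) * G (x + 2 * d))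
    (h₃ : 1 - 4 * (α / (1 + α)) ^ 3 ≤ G (3 * d)) :
    1 - 3 * α / 2 ≤ G x - α / (1 + α) := by
  have hxd : d ≤ x := hG.le_iff_le.1 <| by
    have := hG.monotone (show x ≤ x + 2 * d by linarith)
    rw [hGd, div_le_iff₀ (by linarith [hα.1])]
    nlinarith [hα.2]
  exact one_sub_three_mul_div_two_le hα hx (h₃.trans (hG.monotone (by linarith)))

theorem stmt_13_general (g G Ginv : ℝ → ℝ) (α d₀ : ℝ) (x₁ x₂ C : ℝ → ℝ)
    (hnonneg : ∀ x, 0 ≤ g x)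
    (hint : ∫ x, g x = 1)
    (hsym : ∀ x, g (-x) = g x)
    (hlogconc : ConcaveOn ℝ {x | 0 < g x} (fun x => Real.log (g x)))
    (hG : ∀ x, G x = ∫ t in Set.Iio x, g t)
    (hGmono : StrictMono G)
    (hGinvR : ∀ t ∈ Set.Ioo (0:ℝ) 1, G (Ginv t) = t)
    (hα : α ∈ Set.Ioo (0:ℝ) 1)
    (hd₀ : d₀ = Ginv (1 / (1 + α)))
    (hx₁ : 2 * G (x₁ (2 * d₀)) - 1 = (1 - α) * G (x₁ (2 * d₀) + 2 * d₀))
    (hx₂ : 1 - 2 * G (x₂ (2 * d₀)) = (1 - α) * G (x₂ (2 * d₀) + 2 * d₀))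
    (hC : C (2 * d₀) = G (x₁ (2 * d₀)) - G (x₂ (2 * d₀))) :
    x₂ (2 * d₀) = -d₀ ∧ C (2 * d₀) ≥ 1 - 3 * α / 2 := by
  have h1α : 0 < 1 + α := by linarith [hα.1]
  have hGd₀ : G d₀ = 1 / (1 + α) :=
    hd₀ ▸ hGinvR _ ⟨by positivity, by rw [div_lt_one h1α]; linarith [hα.1]⟩
  have hGnegd₀ : G (-d₀) = α / (1 + α) := by
    rw [cdf_neg hint hsym hG, hGd₀]; field_simp; ring
  have hd₀pos : 0 < d₀ := by
    have : -d₀ < d₀ := hGmono.lt_iff_lt.1 <| by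
      rw [hGnegd₀, hGd₀]; exact div_lt_div_of_pos_right hα.2 h1α
    linarith
  have hx₂d₀ : x₂ (2 * d₀) = -d₀ :=
    hGmono.eq_of_one_sub_two_mul_eq (by linarith [hα.2]) hx₂ <| by
      rw [show -d₀ + 2 * d₀ = d₀ by ring, hGnegd₀, hGd₀]; field_simp; ring
  have h₃ := one_sub_four_mul_pow_le_cdf_three_mul hnonneg hint hsym hlogconc hG hd₀pos.le
  rw [← cdf_neg hint hsym hG, hGnegd₀] at h₃
  refine ⟨hx₂d₀, ?_⟩
  rw [hC, hx₂d₀, hGnegd₀]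
  exact one_sub_three_mul_div_two_le_cdf_sub hGmono hα hd₀pos.le hGd₀ hx₁ h₃

theorem stmt_13 (g G Ginv : ℝ → ℝ) (α d₀ : ℝ) (x₁ x₂ C : ℝ → ℝ)
    (hnonneg : ∀ x, 0 ≤ g x)
    (hint : ∫ x, g x = 1)
    (hsym : ∀ x, g (-x) = g x)
    (hunimodal : AntitoneOn g (Set.Ici 0))
    (hlogconc : ConcaveOn ℝ {x | 0 < g x} (fun x => Real.log (g x)))
    (hG : ∀ x, G x = ∫ t in Set.Iio x, g t)
    (hGmono : StrictMono G)
    (hGcont : Continuous G)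
    (hGinvL : ∀ x, Ginv (G x) = x)
    (hGinvR : ∀ t ∈ Set.Ioo (0:ℝ) 1, G (Ginv t) = t)
    (hα : α ∈ Set.Ioo (0:ℝ) 1)
    (hd₀ : d₀ = Ginv (1 / (1 + α)))
    (hx₁ : 2 * G (x₁ (2 * d₀)) - 1 = (1 - α) * G (x₁ (2 * d₀) + 2 * d₀))
    (hx₂ : 1 - 2 * G (x₂ (2 * d₀)) = (1 - α) * G (x₂ (2 * d₀) + 2 * d₀))
    (hC : C (2 * d₀) = G (x₁ (2 * d₀)) - G (x₂ (2 * d₀))) :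
    x₂ (2 * d₀) = -d₀ ∧ C (2 * d₀) ≥ 1 - 3 * α / 2 :=
  stmt_13_general g G Ginv α d₀ x₁ x₂ C hnonneg hint hsym hlogconc hG hGmono hGinvR hα hd₀ hx₁ hx₂
    hC
end

section
/- Let g be symmetric about 0, unimodal, log-concave with α = Ḡ(d₀)/(1−Ḡ(d₀)) where d₀ = G⁻¹(1/(1+α)). If g(d₀)/g(2d₀) ≥ (1−α)/(2α) (which follows from the inequality g(z)/g(2z) ≥ 1/(2Ḡ(z)) − 1 at z = d₀), then (1−α)² g(d₀) g(d₀+d₁) + α(1−α) g(d₁) g(d₀+d₁) ≤ 2α g(d₀) g(d₁), where d₁ = G⁻¹(1−α/2) ≥ d₀. -/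
/-!
Log-concavity of `g` gives the monotone likelihood ratio inequality
`g d₀ g(d₀ + d₁) ≤ g(2d₀) g d₁`, since `2d₀` and `d₁` are convex combinations of `d₀` and
`d₀ + d₁` with complementary weights. Hence, using `g d₁ ≤ g d₀`,
`(1-α)² g d₀ g(d₀+d₁) + α(1-α) g d₁ g(d₀+d₁) ≤ (1-α) g d₀ g(d₀+d₁) ≤ (1-α) g(2d₀) g d₁`,
and the ratio hypothesis bounds the last term by `2α g d₀ g d₁`.
-/

lemma mul_le_mul_shift_of_logConcave_s17 {g : ℝ → ℝ}
    (hg : ConcaveOn ℝ {x | 0 < g x} fun x => Real.log (g x)) {x y h : ℝ}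
    (hxy : x ≤ y) (hh : 0 ≤ h) (hx : 0 < g x) (hyh : 0 < g (y + h)) :
    g x * g (y + h) ≤ g (x + h) * g y := by
  rcases (add_le_add hxy hh).eq_or_lt' with hdeg | hlt
  · obtain rfl : h = 0 := by linarith
    obtain rfl : y = x := by linarith
    rw [add_zero, mul_comm]
  -- `x + h` and `y` are the convex combinations of `x` and `y + h` with weights `(1 - b, b)`
  -- and `(b, 1 - b)`, where `b (y + h - x) = h`.
  obtain ⟨b, hb⟩ : ∃ b, b * (y + h - x) = h := ⟨h / (y + h - x), div_mul_cancel₀ _ (by linarith)⟩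
  have hb₀ : 0 ≤ b := by nlinarith
  have hb₁ : b ≤ 1 := by nlinarith
  have hxh : (1 - b) • x + b • (y + h) = x + h := by
    simp only [smul_eq_mul]; linear_combination hb
  have hy : b • x + (1 - b) • (y + h) = y := by
    simp only [smul_eq_mul]; linear_combination -hb
  have hxh_mem := hg.1 hx hyh (sub_nonneg.2 hb₁) hb₀ (by ring)
  have hy_mem := hg.1 hx hyh hb₀ (sub_nonneg.2 hb₁) (by ring)
  have hxh_log := hg.2 hx hyh (sub_nonneg.2 hb₁) hb₀ (by ring)
  have hy_log := hg.2 hx hyh hb₀ (sub_nonneg.2 hb₁) (by ring)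
  rw [hxh] at hxh_mem hxh_log
  rw [hy] at hy_mem hy_log
  simp only [Set.mem_ofPred_eq, smul_eq_mul] at hxh_mem hy_mem hxh_log hy_log
  rw [← Real.log_le_log_iff (by positivity) (by positivity),
    Real.log_mul hx.ne' hyh.ne', Real.log_mul hxh_mem.ne' hy_mem.ne']
  linarith

theorem stmt_17_general (g : ℝ → ℝ) (α d₀ d₁ : ℝ)
    (hunimodal : AntitoneOn g (Set.Ici 0))
    (hlogconc : ConcaveOn ℝ {x | 0 < g x} (fun x => Real.log (g x)))
    (hα : α ∈ Set.Ioo (0:ℝ) 1)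
    (hd₀pos : 0 < d₀)
    (hd₀d₁ : d₀ ≤ d₁)
    (hgpos : 0 < g d₀ ∧ 0 < g d₁ ∧ 0 < g (2 * d₀) ∧ 0 < g (d₀ + d₁))
    (hratio : g d₀ / g (2 * d₀) ≥ (1 - α) / (2 * α)) :
    (1 - α) ^ 2 * g d₀ * g (d₀ + d₁) + α * (1 - α) * g d₁ * g (d₀ + d₁)
      ≤ 2 * α * g d₀ * g d₁ := by
  obtain ⟨hg₀, hg₁, hg₂, hg₃⟩ := hgpos
  obtain ⟨hα₀, hα₁⟩ := hα
  have hmlr : g d₀ * g (d₀ + d₁) ≤ g (2 * d₀) * g d₁ := by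
    simpa [two_mul, add_comm d₁] using
      mul_le_mul_shift_of_logConcave_s17 hlogconc hd₀d₁ hd₀pos.le hg₀ (by rwa [add_comm])
  have hdecr : g d₁ ≤ g d₀ := hunimodal hd₀pos.le (hd₀pos.le.trans hd₀d₁) hd₀d₁
  have hratio' : (1 - α) * g (2 * d₀) ≤ 2 * α * g d₀ := by
    rw [ge_iff_le, div_le_div_iff₀ (by positivity) hg₂] at hratio
    linarith
  calc (1 - α) ^ 2 * g d₀ * g (d₀ + d₁) + α * (1 - α) * g d₁ * g (d₀ + d₁)
      = (1 - α) * g (d₀ + d₁) * ((1 - α) * g d₀ + α * g d₁) := by ring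
    _ ≤ (1 - α) * g (d₀ + d₁) * g d₀ := by
        gcongr
        nlinarith
    _ ≤ (1 - α) * (g (2 * d₀) * g d₁) := by
        rw [mul_assoc, mul_comm (g _)]
        gcongr
    _ ≤ 2 * α * g d₀ * g d₁ := by
        rw [← mul_assoc]
        gcongr

theorem stmt_17 (g G Ginv : ℝ → ℝ) (α d₀ d₁ : ℝ)
    (hnonneg : ∀ x, 0 ≤ g x)
    (hint : ∫ x, g x = 1)
    (hsym : ∀ x, g (-x) = g x)
    (hunimodal : AntitoneOn g (Set.Ici 0))
    (hlogconc : ConcaveOn ℝ {x | 0 < g x} (fun x => Real.log (g x)))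
    (hG : ∀ x, G x = ∫ t in Set.Iio x, g t)
    (hGinvL : ∀ x, Ginv (G x) = x)
    (hGinvR : ∀ t ∈ Set.Ioo (0:ℝ) 1, G (Ginv t) = t)
    (hα : α ∈ Set.Ioo (0:ℝ) 1)
    (hαeq : α = (1 - G d₀) / (1 - (1 - G d₀)))
    (hd₀ : d₀ = Ginv (1 / (1 + α)))
    (hd₁ : d₁ = Ginv (1 - α / 2))
    (hd₀pos : 0 < d₀)
    (hd₀d₁ : d₀ ≤ d₁)
    (hgpos : 0 < g d₀ ∧ 0 < g d₁ ∧ 0 < g (2 * d₀) ∧ 0 < g (d₀ + d₁))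
    (hratio : g d₀ / g (2 * d₀) ≥ (1 - α) / (2 * α)) :
    (1 - α) ^ 2 * g d₀ * g (d₀ + d₁) + α * (1 - α) * g d₁ * g (d₀ + d₁)
      ≤ 2 * α * g d₀ * g d₁ :=
  stmt_17_general g α d₀ d₁ hunimodal hlogconc hα hd₀pos hd₀d₁ hgpos hratio
end
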